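/- arXiv:1608.05444 — 7 statements merged into one kernel-verified Lean document; each statement's English description precedes it below -/
import Mathlib

section
/- Let H = (D, A, →, ≤, ∼) be a navigation history and d ∈ D. Define traversal of the history to d as replacing A by A' = { e ∈ A | ¬(d ∼ e) } ∪ {d}. Then H' = (D, A', →, ≤, ∼) is again a navigation history, i.e. it satisfies all the navigation history axioms. -/
structure NavData (α : Type) where
  D : Set α
  A : Set α
  child : α → α → Prop
  le : α → α → Prop
  sim : α → α → Prop

namespace NavData

variable {α : Type}

/-- All the navigation history axioms: finiteness, A ⊆ D, the child relation is a
forest on D, ≤ is a total order on D, ∼ is an equivalence on D, every document has a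
unique active ∼-representative, same-session documents share parents, parents precede
children chronologically. -/
def IsNavHist (H : NavData α) : Prop :=
  H.D.Finite ∧
  H.A ⊆ H.D ∧
  (∀ d e, H.child d e → d ∈ H.D ∧ e ∈ H.D) ∧
  (∀ d, ¬ Relation.TransGen H.child d d) ∧
  (∀ p q e, H.child p e → H.child q e → p = q) ∧
  (∀ d ∈ H.D, H.le d d) ∧
  (∀ d e f, H.le d e → H.le e f → H.le d f) ∧
  (∀ d e, H.le d e → H.le e d → d = e) ∧
  (∀ d e, H.le d e → d ∈ H.D ∧ e ∈ H.D) ∧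
  (∀ d ∈ H.D, ∀ e ∈ H.D, H.le d e ∨ H.le e d) ∧
  (∀ d ∈ H.D, H.sim d d) ∧
  (∀ d e, H.sim d e → H.sim e d) ∧
  (∀ d e f, H.sim d e → H.sim e f → H.sim d f) ∧
  (∀ d e, H.sim d e → d ∈ H.D ∧ e ∈ H.D) ∧
  (∀ d ∈ H.D, ∃! d', d' ∈ H.A ∧ H.sim d d') ∧
  (∀ d e e', H.child d e → H.sim e e' → H.child d e') ∧
  (∀ d e, H.child d e → H.le d e)

/-- Strict chronological order `d < e`. -/
def lt (H : NavData α) (d e : α) : Prop := H.le d e ∧ d ≠ e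

/-- `d ≲ e` : same session and strictly earlier. -/
def before (H : NavData α) (d e : α) : Prop := H.sim d e ∧ H.lt d e

/-- The joint session future: documents strictly later than some active same-session doc. -/
def JSF (H : NavData α) : Set α := { e | ∃ d ∈ H.A, H.before d e }

/-- Traversing the history to `d`: replace A by { e ∈ A | ¬(d ∼ e) } ∪ {d}. -/
def traverseTo (H : NavData α) (d : α) : NavData α :=
  { H with A := { e | (e ∈ H.A ∧ ¬ H.sim d e) ∨ e = d } }

def WellFormed (H : NavData α) : Prop :=
  ∀ a b c d, H.before a b → H.before c d → a ∈ H.A → d ∈ H.A → H.le d b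

/-- The forward target: the ≤-least element of the joint session future. -/
def IsForwardTarget (H : NavData α) (f : α) : Prop :=
  f ∈ H.JSF ∧ ∀ e ∈ H.JSF, H.le f e

def CanGoBack (H : NavData α) (d : α) : Prop := ∃ c, H.before c d

/-- The back target: the ≤-largest active document that can go back. -/
def IsBackTarget (H : NavData α) (b : α) : Prop :=
  b ∈ H.A ∧ H.CanGoBack b ∧ ∀ d ∈ H.A, H.CanGoBack d → H.le d b

/-- `d` is the ≤-largest document with `d ≲ d'`. -/
def IsBackStepTarget (H : NavData α) (d' d : α) : Prop :=
  H.before d d' ∧ ∀ e, H.before e d' → H.le e d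

/-- Traversing the history from `d'`: traversing to the ≤-largest `d` with `d ≲ d'`. -/
def TraverseFrom (H : NavData α) (d' : α) (H' : NavData α) : Prop :=
  ∃ d, H.IsBackStepTarget d' d ∧ H' = H.traverseTo d

/-- `ds` lists the first entries of the joint session future, in increasing order. -/
def FirstOfJSF (H : NavData α) (ds : List α) : Prop :=
  ds.Chain' H.lt ∧ (∀ d ∈ ds, d ∈ H.JSF) ∧
  ∀ e ∈ H.JSF, e ∉ ds → ∀ d ∈ ds, H.lt d e

/-- Patched traversal by +n: traverse successively to each of the first n entries of the
joint session future. -/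
def TraverseByPlus (H : NavData α) (n : ℕ) (H' : NavData α) : Prop :=
  ∃ ds : List α, ds.length = n ∧ H.FirstOfJSF ds ∧ H' = ds.foldl traverseTo H

/-- Patched traversal by −n: traverse successively from each successive back target. -/
inductive TraverseByMinus : NavData α → ℕ → NavData α → Prop
  | zero (H : NavData α) : TraverseByMinus H 0 H
  | succ {H H₁ H' : NavData α} {b : α} {n : ℕ} :
      H.IsBackTarget b → H.TraverseFrom b H₁ → TraverseByMinus H₁ n H' →
      TraverseByMinus H (n + 1) H'

/-- Traversal by an integer delta. -/
def TraverseBy (H : NavData α) (δ : ℤ) (H' : NavData α) : Prop :=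
  if 0 ≤ δ then H.TraverseByPlus δ.toNat H' else TraverseByMinus H (-δ).toNat H'

/-- The active-child relation `d ↠ e`. -/
def activeChild (H : NavData α) (d e : α) : Prop := H.child d e ∧ e ∈ H.A

def IsActiveRoot (H : NavData α) (d : α) : Prop :=
  d ∈ H.A ∧ ∀ e, ¬ H.child e d

/-- Fully active: reachable from an active root by active children. -/
def FullyActive (H : NavData α) (d : α) : Prop :=
  ∃ d₀, H.IsActiveRoot d₀ ∧ Relation.ReflTransGen H.activeChild d₀ d

/-- Restrict a navigation history away from a set `R` of documents. -/
def restrictAway (H : NavData α) (R : Set α) : NavData α where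
  D := H.D \ R
  A := H.A \ R
  child e f := H.child e f ∧ e ∉ R ∧ f ∉ R
  le e f := H.le e f ∧ e ∉ R ∧ f ∉ R
  sim e f := H.sim e f ∧ e ∉ R ∧ f ∉ R

/-- Deleting `d`: removing `d` together with all its →-descendants. -/
def deleteDoc (H : NavData α) (d : α) : NavData α :=
  H.restrictAway { e | Relation.ReflTransGen H.child d e }

/-- Replacing `d` by a fresh `d'`. -/
def replaceDoc (H : NavData α) (d d' : α) : NavData α where
  D := H.D ∪ {d'}
  A := (H.A \ {d}) ∪ {d'}
  child e f := H.child e f ∨ (H.child e d ∧ f = d')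
  le e f := H.le e f ∨ ((e ∈ H.D ∨ e = d') ∧ f = d')
  sim e f := H.sim e f ∨ (e = d' ∧ f = d') ∨ (H.sim e d ∧ f = d') ∨ (H.sim d f ∧ e = d')

/-- Deleting the entire joint session future (each member with its descendants). -/
def deleteJSF (H : NavData α) : NavData α :=
  H.restrictAway { e | ∃ j ∈ H.JSF, Relation.ReflTransGen H.child j e }

/-- Patched navigation from `d` to `d'`: delete the joint session future, then
replace `d` by `d'`. -/
def navigateFrom (H : NavData α) (d d' : α) : NavData α :=
  (H.deleteJSF).replaceDoc d d'

/-- Unpatched traversal by +n: traverse directly to the n-th entry of the joint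
session future (a single traversal). -/
def UnpatchedTraverseByPlus (H : NavData α) (n : ℕ) (H' : NavData α) : Prop :=
  ∃ ds : List α, H.FirstOfJSF ds ∧ ds.length = n ∧
    ∃ d, ds.getLast? = some d ∧ H' = H.traverseTo d

end NavData
/-! Traversal changes only the active set. Within the session of `d`, the document `d` becomes
the unique active one; every other session keeps its old active representative, since none of
its members is ∼-equivalent to `d`. -/

namespace NavData

variable {α : Type} {H : NavData α} {d : α}

theorem traverseTo_A_subset (hA : H.A ⊆ H.D) (hd : d ∈ H.D) : (H.traverseTo d).A ⊆ H.D := by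
  rintro e (⟨he, -⟩ | rfl)
  exacts [hA he, hd]

theorem existsUnique_sim_traverseTo_A
    (hsymm : ∀ d e, H.sim d e → H.sim e d)
    (htrans : ∀ d e f, H.sim d e → H.sim e f → H.sim d f)
    (huniq : ∀ e ∈ H.D, ∃! e', e' ∈ H.A ∧ H.sim e e') {e : α} (he : e ∈ H.D) :
    ∃! e', e' ∈ (H.traverseTo d).A ∧ H.sim e e' := by
  by_cases hde : H.sim d e
  · refine ⟨d, ⟨Or.inr rfl, hsymm _ _ hde⟩, ?_⟩
    rintro y ⟨⟨-, hdy⟩ | rfl, hey⟩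
    · exact absurd (htrans _ _ _ hde hey) hdy
    · rfl
  · obtain ⟨e', ⟨he'A, hee'⟩, hunique⟩ := huniq e he
    refine ⟨e', ⟨Or.inl ⟨he'A, fun hde' => hde (htrans _ _ _ hde' (hsymm _ _ hee'))⟩, hee'⟩, ?_⟩
    rintro y ⟨⟨hyA, -⟩ | rfl, hey⟩
    · exact hunique y ⟨hyA, hey⟩
    · exact absurd (hsymm _ _ hey) hde

end NavData

theorem stmt2 {α : Type} (H : NavData α) (hH : H.IsNavHist) {d : α}
    (hd : d ∈ H.D) : (H.traverseTo d).IsNavHist := by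
  obtain ⟨hfin, hAD, hcD, hirr, hpar, hrefl, hletrans, hanti, hleD, htot,
    hsrefl, hsymm, hstrans, hsD, huniq, hcsim, hcle⟩ := hH
  exact ⟨hfin, NavData.traverseTo_A_subset hAD hd, hcD, hirr, hpar, hrefl, hletrans, hanti,
    hleD, htot, hsrefl, hsymm, hstrans, hsD,
    fun e he => NavData.existsUnique_sim_traverseTo_A hsymm hstrans huniq he, hcsim, hcle⟩
end

section
/- Let H = (D, A, →, ≤, ∼) be a navigation history, let d ∈ A, and let d' ∉ D be fresh. Then replacing d by d' in H yields a navigation history. Concretely, H' = (D ∪ {d'}, A', →', ≤', ∼') defined by: A' = (A \ {d}) ∪ {d'}; e ≤' f iff (e ≤ f) or f = d'; e →' f iff (e → f) or (e → d and f = d'); e ∼' f iff (e ∼ f) or e = f = d' or (e ∼ d and f = d') or (d ∼ f and e = d'); satisfies all the navigation history axioms. -/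
/-! The map `unreplace d d'`, sending `d'` back to `d` and fixing everything else, transports
the new history onto the old one: the child and session relations of `H.replaceDoc d d'` are
exactly the pullbacks of those of `H` (the first argument of `→'` is never `d'`), and it maps
the new active set bijectively onto the old one. So all axioms except those about `≤'` are
inherited from `H`; for `≤'`, the fresh `d'` is simply adjoined as a new maximum. -/

theorem Set.BijOn.existsUnique_of_existsUnique {α β : Type*} {f : α → β} {s : Set α}
    {t : Set β} {p : β → Prop} (hf : Set.BijOn f s t) (h : ∃! y, y ∈ t ∧ p y) :
    ∃! x, x ∈ s ∧ p (f x) := by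
  obtain ⟨_, ⟨hy, hpy⟩, huniq⟩ := h
  obtain ⟨x, hx, rfl⟩ := hf.surjOn hy
  exact ⟨x, ⟨hx, hpy⟩, fun x' ⟨hx', hpx'⟩ => hf.injOn hx' hx (huniq _ ⟨hf.mapsTo hx', hpx'⟩)⟩

namespace NavData

variable {α : Type} {H : NavData α} {d d' x y z : α}

open Classical in
noncomputable def unreplace (d d' x : α) : α := if x = d' then d else x

@[simp]
theorem unreplace_self : unreplace d d' d' = d := if_pos rfl

theorem unreplace_of_ne (h : x ≠ d') : unreplace d d' x = x := if_neg h

theorem unreplace_mem_D_iff (hdD : d ∈ H.D) :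
    unreplace d d' x ∈ H.D ↔ x ∈ (H.replaceDoc d d').D := by
  by_cases hx : x = d'
  · subst hx
    simpa [replaceDoc] using hdD
  · simp [replaceDoc, unreplace_of_ne hx, hx]

theorem replaceDoc_child_iff (hd' : d' ∉ H.D) (hcdom : ∀ d e, H.child d e → d ∈ H.D ∧ e ∈ H.D) :
    (H.replaceDoc d d').child x y ↔ H.child x (unreplace d d' y) := by
  by_cases hy : y = d'
  · subst hy
    have : ¬ H.child x y := fun h => hd' (hcdom x y h).2
    simp [replaceDoc, this]
  · simp [replaceDoc, unreplace_of_ne hy, hy]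

theorem replaceDoc_sim_iff (hd' : d' ∉ H.D)
    (hsdom : ∀ d e, H.sim d e → d ∈ H.D ∧ e ∈ H.D) (hdd : H.sim d d) :
    (H.replaceDoc d d').sim x y ↔ H.sim (unreplace d d' x) (unreplace d d' y) := by
  have hl : ¬ H.sim d' y := fun h => hd' (hsdom _ _ h).1
  have hr : ¬ H.sim x d' := fun h => hd' (hsdom _ _ h).2
  by_cases hx : x = d' <;> by_cases hy : y = d'
  · subst hx hy
    simp [replaceDoc, hdd]
  · subst hx
    simp [replaceDoc, hl, hy, unreplace_of_ne hy]
  · subst hy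
    simp [replaceDoc, hr, hx, unreplace_of_ne hx]
  · simp [replaceDoc, hx, hy, unreplace_of_ne hx, unreplace_of_ne hy]

theorem replaceDoc_child_acyclic (hd' : d' ∉ H.D) (hcdom : ∀ d e, H.child d e → d ∈ H.D ∧ e ∈ H.D)
    (hacyc : ∀ d, ¬ Relation.TransGen H.child d d) :
    ¬ Relation.TransGen (H.replaceDoc d d').child x x := by
  refine fun h => hacyc (unreplace d d' x) (h.lift _ fun a b hab => ?_)
  have hab := (replaceDoc_child_iff hd' hcdom).1 hab
  rwa [Function.onFun, unreplace_of_ne (ne_of_mem_of_not_mem (hcdom _ _ hab).1 hd')]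

theorem unreplace_bijOn (hd : d ∈ H.A) (hd'A : d' ∉ H.A) :
    Set.BijOn (unreplace d d') (H.replaceDoc d d').A H.A := by
  have hA' : ∀ x ∈ (H.replaceDoc d d').A, x ≠ d' → x ∈ H.A ∧ x ≠ d := by
    rintro x (hx | hx) hxd'
    exacts [hx, absurd hx hxd']
  refine ⟨fun x hx => ?_, fun x hx y hy hxy => ?_, fun z hz => ?_⟩
  · by_cases hx' : x = d'
    · rwa [hx', unreplace_self]
    · rw [unreplace_of_ne hx']
      exact (hA' x hx hx').1
  · by_cases hx' : x = d' <;> by_cases hy' : y = d'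
    · exact hx'.trans hy'.symm
    · rw [hx', unreplace_self, unreplace_of_ne hy'] at hxy
      exact absurd hxy.symm (hA' y hy hy').2
    · rw [hy', unreplace_self, unreplace_of_ne hx'] at hxy
      exact absurd hxy (hA' x hx hx').2
    · rwa [unreplace_of_ne hx', unreplace_of_ne hy'] at hxy
  · by_cases hzd : z = d
    · exact ⟨d', Or.inr rfl, hzd ▸ unreplace_self⟩
    · exact ⟨z, Or.inl ⟨hz, hzd⟩, unreplace_of_ne (ne_of_mem_of_not_mem hz hd'A)⟩

theorem replaceDoc_le_refl (hrefl : ∀ d ∈ H.D, H.le d d) :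
    ∀ x ∈ (H.replaceDoc d d').D, (H.replaceDoc d d').le x x := by
  rintro x (hx | hx)
  · exact Or.inl (hrefl x hx)
  · exact Or.inr ⟨Or.inr hx, hx⟩

theorem replaceDoc_le_trans (hd' : d' ∉ H.D) (hledom : ∀ d e, H.le d e → d ∈ H.D ∧ e ∈ H.D)
    (htrans : ∀ d e f, H.le d e → H.le e f → H.le d f) :
    (H.replaceDoc d d').le x y → (H.replaceDoc d d').le y z → (H.replaceDoc d d').le x z := by
  rintro (hxy | ⟨hx, rfl⟩) (hyz | ⟨-, rfl⟩)
  · exact Or.inl (htrans x y z hxy hyz)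
  · exact Or.inr ⟨Or.inl (hledom x y hxy).1, rfl⟩
  · exact absurd (hledom _ _ hyz).1 hd'
  · exact Or.inr ⟨hx, rfl⟩

theorem replaceDoc_le_antisymm (hd' : d' ∉ H.D) (hledom : ∀ d e, H.le d e → d ∈ H.D ∧ e ∈ H.D)
    (hanti : ∀ d e, H.le d e → H.le e d → d = e) :
    (H.replaceDoc d d').le x y → (H.replaceDoc d d').le y x → x = y := by
  rintro (hxy | ⟨-, rfl⟩) (hyx | ⟨-, rfl⟩)
  · exact hanti x y hxy hyx
  · exact absurd (hledom _ _ hxy).1 hd'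
  · exact absurd (hledom _ _ hyx).1 hd'
  · rfl

theorem replaceDoc_le_dom (hledom : ∀ d e, H.le d e → d ∈ H.D ∧ e ∈ H.D) :
    (H.replaceDoc d d').le x y → x ∈ (H.replaceDoc d d').D ∧ y ∈ (H.replaceDoc d d').D := by
  rintro (h | ⟨hx, rfl⟩)
  · exact ⟨Or.inl (hledom x y h).1, Or.inl (hledom x y h).2⟩
  · exact ⟨hx, Or.inr rfl⟩

theorem replaceDoc_le_total (htot : ∀ d ∈ H.D, ∀ e ∈ H.D, H.le d e ∨ H.le e d) :
    ∀ x ∈ (H.replaceDoc d d').D, ∀ y ∈ (H.replaceDoc d d').D,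
      (H.replaceDoc d d').le x y ∨ (H.replaceDoc d d').le y x := by
  rintro x hx y (hy | rfl)
  · rcases hx with hx | rfl
    · exact (htot x hx y hy).imp Or.inl Or.inl
    · exact Or.inr (Or.inr ⟨Or.inl hy, rfl⟩)
  · exact Or.inl (Or.inr ⟨hx, rfl⟩)

theorem replaceDoc_le_of_child (hd' : d' ∉ H.D) (hcdom : ∀ d e, H.child d e → d ∈ H.D ∧ e ∈ H.D)
    (hcle : ∀ d e, H.child d e → H.le d e) :
    (H.replaceDoc d d').child x y → (H.replaceDoc d d').le x y := by
  rintro (h | ⟨h, rfl⟩)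
  · exact Or.inl (hcle x y h)
  · exact Or.inr ⟨Or.inl (hcdom x d h).1, rfl⟩

end NavData

theorem stmt6 {α : Type} (H : NavData α) (hH : H.IsNavHist) {d d' : α}
    (hd : d ∈ H.A) (hd' : d' ∉ H.D) : (H.replaceDoc d d').IsNavHist := by
  obtain ⟨hfin, hAD, hcdom, hacyc, hpar, hrefl, htrans, hanti, hledom, htot,
    hsrefl, hssymm, hstrans, hsdom, huniq, hcs, hcle⟩ := hH
  have hdD : d ∈ H.D := hAD hd
  have hchild x y := NavData.replaceDoc_child_iff (x := x) (y := y) (d := d) hd' hcdom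
  have hsim x y := NavData.replaceDoc_sim_iff (x := x) (y := y) hd' hsdom (hsrefl d hdD)
  have hmem x := NavData.unreplace_mem_D_iff (x := x) (d' := d') hdD
  refine ⟨?_, ?_, fun x y h => ?_, fun x => ?_, fun p q x hp hq => ?_, ?_, fun x y z => ?_,
    fun x y => ?_, fun x y => ?_, ?_, fun x hx => ?_, fun x y h => ?_, fun x y z hxy hyz => ?_,
    fun x y h => ?_, fun x hx => ?_, fun x y z hxy hyz => ?_, fun x y => ?_⟩
  · exact hfin.union (Set.finite_singleton d')
  · exact Set.union_subset_union (Set.sdiff_subset.trans hAD) le_rfl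
  · have hxy := hcdom _ _ ((hchild x y).1 h)
    exact ⟨Or.inl hxy.1, (hmem y).1 hxy.2⟩
  · exact NavData.replaceDoc_child_acyclic hd' hcdom hacyc
  · exact hpar p q _ ((hchild p x).1 hp) ((hchild q x).1 hq)
  · exact NavData.replaceDoc_le_refl hrefl
  · exact NavData.replaceDoc_le_trans hd' hledom htrans
  · exact NavData.replaceDoc_le_antisymm hd' hledom hanti
  · exact NavData.replaceDoc_le_dom hledom
  · exact NavData.replaceDoc_le_total htot
  · exact (hsim x x).2 (hsrefl _ ((hmem x).2 hx))
  · exact (hsim y x).2 (hssymm _ _ ((hsim x y).1 h))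
  · exact (hsim x z).2 (hstrans _ _ _ ((hsim x y).1 hxy) ((hsim y z).1 hyz))
  · have hxy := hsdom _ _ ((hsim x y).1 h)
    exact ⟨(hmem x).1 hxy.1, (hmem y).1 hxy.2⟩
  · simp_rw [hsim]
    exact (NavData.unreplace_bijOn hd fun h => hd' (hAD h)).existsUnique_of_existsUnique
      (huniq _ ((hmem x).2 hx))
  · exact (hchild x z).2 (hcs _ _ _ ((hchild x y).1 hxy) ((hsim y z).1 hyz))
  · exact NavData.replaceDoc_le_of_child hd' hcdom hcle
end

section
/- Let H be a well-formed navigation history, let f be the forward target of H (the ≤-least element of the joint session future), assuming it exists, and let H' be the result of traversing the history to f. Then H' is well-formed. -/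
theorem stmt7 {α : Type} (H : NavData α) (hH : H.IsNavHist)
    (hwf : H.WellFormed) {f : α} (hf : H.IsForwardTarget f) :
    (H.traverseTo f).WellFormed := by
  obtain ⟨-, -, -, -, -, -, htrans, hanti, -, -, -, -, hstrans, -, -, -, -⟩ := hH
  intro a b c d hab hcd ha hd
  -- before / le / sim of traverseTo coincide with H's
  have hab' : H.before a b := hab
  have hcd' : H.before c d := hcd
  have ha' : (a ∈ H.A ∧ ¬ H.sim f a) ∨ a = f := ha
  have hd' : (d ∈ H.A ∧ ¬ H.sim f d) ∨ d = f := hd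
  show H.le d b
  have hbJSF : b ∈ H.JSF := by
    rcases ha' with ⟨haA, -⟩ | rfl
    · exact ⟨a, haA, hab'⟩
    · obtain ⟨a₀, ha₀A, ha₀f⟩ := hf.1
      refine ⟨a₀, ha₀A, hstrans _ _ _ ha₀f.1 hab'.1, htrans _ _ _ ha₀f.2.1 hab'.2.1, ?_⟩
      rintro rfl
      exact ha₀f.2.2 (hanti _ _ ha₀f.2.1 hab'.2.1)
  rcases hd' with ⟨hdA, -⟩ | rfl
  · obtain ⟨x, hxA, hxb⟩ := hbJSF
    exact hwf x b c d hxb hcd' hxA hdA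
  · exact hf.2 b hbJSF
end

section
/- Let H be a well-formed navigation history, say a document d 'can go back' if there exists c with c ≲ d, and let b be the back target of H: the ≤-largest active document that can go back (assuming one exists). Let H' be the result of traversing the history from b, i.e. traversing the history to the ≤-largest element c with c ≲ b. Then H' is well-formed. -/
/-! Traversing to the back-step target `c` of `b` adds only the new active document `c`,
and `b` separates `c` from everything after it: every active document that can go back
lies at or before `b` (maximality of `b`), and every `x` with `c ≲ x` lies at or after `b`,
since a document of the session strictly between `c` and `b` would contradict the
maximality of `c`. Chaining these through `b` covers every pair of the new well-formedness
condition that involves `c`. -/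

namespace NavData

variable {α : Type} {H : NavData α}

theorem IsNavHist.le_refl (hH : H.IsNavHist) {d : α} (hd : d ∈ H.D) : H.le d d :=
  hH.2.2.2.2.2.1 d hd

theorem IsNavHist.le_trans (hH : H.IsNavHist) {d e f : α} (h₁ : H.le d e)
    (h₂ : H.le e f) : H.le d f :=
  hH.2.2.2.2.2.2.1 d e f h₁ h₂

theorem IsNavHist.le_antisymm (hH : H.IsNavHist) {d e : α} (h₁ : H.le d e)
    (h₂ : H.le e d) : d = e :=
  hH.2.2.2.2.2.2.2.1 d e h₁ h₂

theorem IsNavHist.le_total (hH : H.IsNavHist) {d e : α} (hd : d ∈ H.D) (he : e ∈ H.D) :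
    H.le d e ∨ H.le e d :=
  hH.2.2.2.2.2.2.2.2.2.1 d hd e he

theorem IsNavHist.sim_symm (hH : H.IsNavHist) {d e : α} (h : H.sim d e) : H.sim e d :=
  hH.2.2.2.2.2.2.2.2.2.2.2.1 d e h

theorem IsNavHist.sim_trans (hH : H.IsNavHist) {d e f : α} (h₁ : H.sim d e)
    (h₂ : H.sim e f) : H.sim d f :=
  hH.2.2.2.2.2.2.2.2.2.2.2.2.1 d e f h₁ h₂

theorem IsNavHist.mem_D_of_sim (hH : H.IsNavHist) {d e : α} (h : H.sim d e) :
    d ∈ H.D ∧ e ∈ H.D :=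
  hH.2.2.2.2.2.2.2.2.2.2.2.2.2.1 d e h

theorem IsBackStepTarget.le_of_before (hH : H.IsNavHist) {b c x : α}
    (hc : H.IsBackStepTarget b c) (hx : H.before c x) : H.le b x := by
  have hxD := (hH.mem_D_of_sim hx.1).2
  have hbD := (hH.mem_D_of_sim hc.1.1).2
  rcases hH.le_total hxD hbD with hxb | hbx
  · by_cases hxb' : x = b
    · exact hxb' ▸ hH.le_refl hxD
    have hxc : H.le x c :=
      hc.2 x ⟨hH.sim_trans (hH.sim_symm hx.1) hc.1.1, hxb, hxb'⟩
    exact absurd (hH.le_antisymm hx.2.1 hxc) hx.2.2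
  · exact hbx

theorem WellFormed.traverseTo {c : α} (hwf : H.WellFormed)
    (hA : ∀ a ∈ H.A, ∀ x, H.before a x → H.le c x)
    (hc : ∀ x, H.before c x → ∀ d ∈ H.A, H.CanGoBack d → H.le d x) :
    (H.traverseTo c).WellFormed := by
  rintro a x y d hax hyd (⟨ha, -⟩ | rfl) (⟨hd, -⟩ | rfl)
  · exact hwf a x y d hax hyd ha hd
  · exact hA a ha x hax
  · exact hc x hax d hd ⟨y, hyd⟩
  · exact hax.2.1

end NavData

theorem stmt8 {α : Type} (H : NavData α) (hH : H.IsNavHist)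
    (hwf : H.WellFormed) {b : α} (hb : H.IsBackTarget b)
    {H' : NavData α} (ht : H.TraverseFrom b H') : H'.WellFormed := by
  obtain ⟨c, hc, rfl⟩ := ht
  obtain ⟨hbA, -, hbmax⟩ := hb
  refine hwf.traverseTo (fun a ha x hax => ?_) (fun x hcx d hd hdb => ?_)
  · exact hH.le_trans hc.1.2.1 (hwf a x c b hax hc.1 ha hbA)
  · exact hH.le_trans (hbmax d hd hdb) (hc.le_of_before hH hcx)
end

section
/- Let H be a well-formed navigation history with nonempty joint session future, let f be its forward target (the ≤-least element of the joint session future), and let H' be the result of traversing the history to f. Then f is the back target of H' (the ≤-largest active document of H' having some c ≲ f), and traversing the history from f in H' (i.e. traversing to the ≤-largest d with d ≲ f) yields H back again. -/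
/-!
Let `a` be an active document with `a ≲ f`. Minimality of `f` in the joint session future
makes `a` the largest document `≲ f`: any `e` with `a < e ≲ f` would itself lie in the joint
session future. Well-formedness bounds every active document that can go back by `f`, so `f`
is the back target after traversing to it. Since `a ∼ f`, traversing to `f` and then to `a`
is the same as traversing to `a`, which changes nothing because `a` is already the unique
active member of its session.
-/

namespace NavData

variable {α : Type} {H : NavData α}

theorem eq_of_mem_A_of_sim (hH : H.IsNavHist) {a b : α} (ha : a ∈ H.A) (hb : b ∈ H.A)
    (hab : H.sim a b) : a = b := by
  obtain ⟨-, hAD, -, -, -, -, -, -, -, -, hsrefl, -, -, -, hactive, -, -⟩ := hH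
  exact (hactive a (hAD ha)).unique ⟨ha, hsrefl a (hAD ha)⟩ ⟨hb, hab⟩

theorem traverseTo_eq_self (hH : H.IsNavHist) {a : α} (ha : a ∈ H.A) :
    H.traverseTo a = H := by
  suffices hA : {e | (e ∈ H.A ∧ ¬ H.sim a e) ∨ e = a} = H.A by
    simp only [traverseTo, hA]
  ext e
  constructor
  · rintro (⟨he, -⟩ | rfl)
    exacts [he, ha]
  · intro he
    by_cases hea : e = a
    · exact Or.inr hea
    · exact Or.inl ⟨he, fun hae => hea (eq_of_mem_A_of_sim hH ha he hae).symm⟩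

theorem traverseTo_traverseTo_of_sim (hH : H.IsNavHist) {a f : α} (haf : H.sim a f) :
    (H.traverseTo f).traverseTo a = H.traverseTo a := by
  obtain ⟨-, -, -, -, -, -, -, -, -, -, -, hsymm, hstrans, -, -, -, -⟩ := hH
  have hsame : ∀ e, H.sim f e ↔ H.sim a e := fun e =>
    ⟨hstrans _ _ _ haf, hstrans _ _ _ (hsymm _ _ haf)⟩
  simp only [traverseTo, mk.injEq, true_and, and_true]
  ext e
  simp only [Set.mem_ofPred_eq, hsame]
  constructor
  · rintro (⟨⟨he, hae⟩ | rfl, hae'⟩ | rfl)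
    exacts [Or.inl ⟨he, hae⟩, absurd haf hae', Or.inr rfl]
  · rintro (⟨he, hae⟩ | rfl)
    exacts [Or.inl ⟨Or.inl ⟨he, hae⟩, hae⟩, Or.inr rfl]

theorem IsForwardTarget.isBackStepTarget (hH : H.IsNavHist) {a f : α}
    (hf : H.IsForwardTarget f) (ha : a ∈ H.A) (haf : H.before a f) :
    H.IsBackStepTarget f a := by
  obtain ⟨-, hAD, -, -, -, hrefl, -, hanti, hleD, htot, -, hsymm, hstrans, -, -, -, -⟩ := hH
  refine ⟨haf, fun e ⟨hef, hle, hne⟩ => ?_⟩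
  rcases htot e (hleD _ _ hle).1 a (hAD ha) with hea | hae
  · exact hea
  by_cases hea : e = a
  · exact hea ▸ hrefl a (hAD ha)
  have he : e ∈ H.JSF := ⟨a, ha, hstrans _ _ _ haf.1 (hsymm _ _ hef), hae, Ne.symm hea⟩
  exact absurd (hanti _ _ hle (hf.2 e he)) hne

theorem isBackTarget_traverseTo (hH : H.IsNavHist) (hwf : H.WellFormed) {a f : α}
    (ha : a ∈ H.A) (haf : H.before a f) : (H.traverseTo f).IsBackTarget f := by
  obtain ⟨-, -, -, -, -, hrefl, -, -, hleD, -, -, -, -, -, -, -, -⟩ := hH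
  refine ⟨Or.inr rfl, ⟨a, haf⟩, ?_⟩
  rintro d (⟨hd, -⟩ | rfl) ⟨c, hcd⟩
  exacts [hwf a f c d haf hcd ha hd, hrefl d (hleD _ _ haf.2.1).2]

end NavData

theorem stmt9 {α : Type} (H : NavData α) (hH : H.IsNavHist)
    (hwf : H.WellFormed) {f : α} (hf : H.IsForwardTarget f) :
    (H.traverseTo f).IsBackTarget f ∧ (H.traverseTo f).TraverseFrom f H := by
  obtain ⟨a, ha, haf⟩ := hf.1
  refine ⟨H.isBackTarget_traverseTo hH hwf ha haf, a, hf.isBackStepTarget hH ha haf, ?_⟩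
  rw [H.traverseTo_traverseTo_of_sim hH haf.1, H.traverseTo_eq_self hH ha]
end

section
/- Let H be a well-formed navigation history with a back target b (the ≤-largest active document that can go back), and let H' be the result of traversing the history from b. Then b is the forward target of H' (the ≤-least element of H''s joint session future), and traversing the history to b in H' yields H back again. -/
/-!
Traversing from `b` activates `d`, the latest document of `b`'s session before `b`. In the new
history `b` lies in the joint session future via `d`, and it is least there: the future of any
other session lies after `b` by well-formedness, and a document of `b`'s session after `d` but
before `b` would contradict the maximality of `d`. Traversing back to `b` restores the active set,
because `b` was the only active document of its session.
-/

namespace NavData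

variable {α : Type} {H : NavData α} {b d e : α}

namespace IsNavHist

variable (hH : H.IsNavHist)
include hH

theorem sim_symm_s10 (h : H.sim d e) : H.sim e d := hH.2.2.2.2.2.2.2.2.2.2.2.1 d e h

theorem sim_trans_s10 (h₁ : H.sim b d) (h₂ : H.sim d e) : H.sim b e :=
  hH.2.2.2.2.2.2.2.2.2.2.2.2.1 b d e h₁ h₂

theorem le_antisymm_s10 (h₁ : H.le d e) (h₂ : H.le e d) : d = e := hH.2.2.2.2.2.2.2.1 d e h₁ h₂

theorem le_total_of_sim (h : H.sim d e) : H.le d e ∨ H.le e d :=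
  have hDsim := hH.2.2.2.2.2.2.2.2.2.2.2.2.2.1 d e h
  hH.2.2.2.2.2.2.2.2.2.1 d hDsim.1 e hDsim.2

theorem eq_of_sim_of_mem_active (hd : d ∈ H.A) (he : e ∈ H.A) (h : H.sim d e) : d = e := by
  have hdD : d ∈ H.D := hH.2.1 hd
  obtain ⟨r, -, hr⟩ := hH.2.2.2.2.2.2.2.2.2.2.2.2.2.2.1 d hdD
  rw [hr e ⟨he, h⟩, hr d ⟨hd, hH.2.2.2.2.2.2.2.2.2.2.1 d hdD⟩]

end IsNavHist

@[simp]
theorem mem_traverseTo_A : e ∈ (H.traverseTo d).A ↔ (e ∈ H.A ∧ ¬ H.sim d e) ∨ e = d :=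
  Iff.rfl

theorem traverseTo_traverseTo_of_sim_s10 (hH : H.IsNavHist) (hb : b ∈ H.A) (hdb : H.sim d b) :
    (H.traverseTo d).traverseTo b = H := by
  suffices hA : ((H.traverseTo d).traverseTo b).A = H.A by
    cases H
    exact congrArg (fun A => NavData.mk _ A _ _ _) hA
  ext e
  simp only [mem_traverseTo_A]
  constructor
  · rintro (⟨⟨he, -⟩ | rfl, hbe⟩ | rfl)
    · exact he
    · exact absurd (hH.sim_symm_s10 hdb) hbe
    · exact hb
  · intro he
    by_cases hbe : H.sim b e
    · exact Or.inr (hH.eq_of_sim_of_mem_active he hb (hH.sim_symm_s10 hbe))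
    · exact Or.inl ⟨Or.inl ⟨he, fun hde => hbe (hH.sim_trans_s10 (hH.sim_symm_s10 hdb) hde)⟩, hbe⟩

theorem le_of_isBackStepTarget_of_before (hH : H.IsNavHist) (hd : H.IsBackStepTarget b d)
    (hde : H.before d e) : H.le b e := by
  have hbe : H.sim b e := hH.sim_trans_s10 (hH.sim_symm_s10 hd.1.1) hde.1
  rcases hH.le_total_of_sim hbe with hle | heb
  · exact hle
  obtain rfl | hne := eq_or_ne e b
  · exact heb
  -- `e ≲ b`, so maximality of `d` gives `e ≤ d`, contradicting `d < e`
  exact absurd (hH.le_antisymm_s10 hde.2.1 (hd.2 e ⟨hH.sim_symm_s10 hbe, heb, hne⟩)) hde.2.2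

theorem isForwardTarget_traverseTo_of_isBackStepTarget (hH : H.IsNavHist) (hwf : H.WellFormed)
    (hb : b ∈ H.A) (hd : H.IsBackStepTarget b d) : (H.traverseTo d).IsForwardTarget b := by
  refine ⟨⟨d, Or.inr rfl, hd.1⟩, ?_⟩
  rintro e ⟨a, ⟨ha, -⟩ | rfl, hae⟩
  · exact hwf a e d b hae hd.1 ha hb
  · exact le_of_isBackStepTarget_of_before (H := H) hH hd hae

end NavData

theorem stmt10 {α : Type} (H : NavData α) (hH : H.IsNavHist)
    (hwf : H.WellFormed) {b : α} (hb : H.IsBackTarget b)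
    {H' : NavData α} (ht : H.TraverseFrom b H') :
    H'.IsForwardTarget b ∧ H'.traverseTo b = H := by
  obtain ⟨d, hd, rfl⟩ := ht
  exact ⟨H.isForwardTarget_traverseTo_of_isBackStepTarget hH hwf hb.1 hd,
    H.traverseTo_traverseTo_of_sim_s10 hH hb.1 hd.1.1⟩
end

section
/- Let H be a navigation history, let d be fully active in H, let d' ∉ D be fresh, and let H' be the result of navigating from d to d' (delete the joint session future, then replace d by d'). Then d' is fully active in H'. -/
/-! The documents on the active path `d₀ ↠* d` are never deleted: a deleted document is either a
member of the joint session future, which holds no active document, or the child of a deleted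
document, and along the path the parent of each document is its predecessor. After the deletion
the path survives, and replacing `d` redirects its last edge to `d'`; the earlier documents stay
active because they are proper ancestors of `d` in a forest. -/

namespace NavData

variable {α : Type} {H G : NavData α} {d d' d₀ p : α}

theorem IsNavHist.subset_D_of_mem_A (hH : H.IsNavHist) : H.A ⊆ H.D := hH.2.1

theorem IsNavHist.mem_D_of_child (hH : H.IsNavHist) {e f : α} (h : H.child e f) :
    e ∈ H.D ∧ f ∈ H.D :=
  hH.2.2.1 e f h

theorem IsNavHist.not_transGen_child_self (hH : H.IsNavHist) (e : α) :
    ¬ Relation.TransGen H.child e e :=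
  hH.2.2.2.1 e

theorem IsNavHist.parent_unique (hH : H.IsNavHist) {p q e : α} (hp : H.child p e)
    (hq : H.child q e) : p = q :=
  hH.2.2.2.2.1 p q e hp hq

theorem IsNavHist.notMem_A_of_mem_JSF (hH : H.IsNavHist) {e : α} (he : e ∈ H.JSF) :
    e ∉ H.A := by
  obtain ⟨-, -, -, -, -, -, -, -, -, -, hrefl, hsymm, -, hsimD, hunique, -, -⟩ := hH
  rintro heA
  obtain ⟨a, haA, hae, -, hne⟩ := he
  have he_D : e ∈ H.D := (hsimD a e hae).2
  obtain ⟨u, -, hu⟩ := hunique e he_D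
  exact hne ((hu a ⟨haA, hsymm a e hae⟩).trans (hu e ⟨heA, hrefl e he_D⟩).symm)

theorem not_exists_descendant_of_reflTransGen_activeChild {S : Set α}
    (hparent : ∀ {p q e}, H.child p e → H.child q e → p = q) (hS : ∀ e ∈ S, e ∉ H.A)
    (hroot : H.IsActiveRoot d₀) (hp : Relation.ReflTransGen H.activeChild d₀ p) :
    ¬ ∃ j ∈ S, Relation.ReflTransGen H.child j p := by
  induction hp with
  | refl =>
    rintro ⟨j, hjS, hj⟩
    rcases hj.cases_tail with rfl | ⟨c, -, hc⟩
    · exact hS _ hjS hroot.1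
    · exact hroot.2 c hc
  | @tail b c _ hbc ih =>
    rintro ⟨j, hjS, hj⟩
    rcases hj.cases_tail with rfl | ⟨e, hje, hec⟩
    · exact hS _ hjS hbc.2
    · exact ih ⟨j, hjS, hparent hec hbc.1 ▸ hje⟩

theorem fullyActive_restrictAway {R : Set α} (hroot : H.IsActiveRoot d₀)
    (hpath : Relation.ReflTransGen H.activeChild d₀ d)
    (hR : ∀ p, Relation.ReflTransGen H.activeChild d₀ p → p ∉ R) :
    (H.restrictAway R).FullyActive d := by
  refine ⟨d₀, ⟨⟨hroot.1, hR d₀ .refl⟩, fun e he => hroot.2 e he.1⟩, ?_⟩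
  induction hpath with
  | refl => exact .refl
  | @tail b c hb hbc ih =>
    exact ih.tail
      ⟨⟨hbc.1, hR b hb, hR c (hb.tail hbc)⟩, hbc.2, hR c (hb.tail hbc)⟩

theorem IsNavHist.fullyActive_deleteJSF (hH : H.IsNavHist) (hd : H.FullyActive d) :
    H.deleteJSF.FullyActive d := by
  obtain ⟨d₀, hroot, hpath⟩ := hd
  exact fullyActive_restrictAway hroot hpath fun _ hp =>
    not_exists_descendant_of_reflTransGen_activeChild hH.parent_unique
      (fun _ he => hH.notMem_A_of_mem_JSF he) hroot hp

theorem reflTransGen_activeChild_replaceDoc (hacyc : ∀ e, ¬ Relation.TransGen G.child e e)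
    (hp : Relation.ReflTransGen G.activeChild d₀ p) (hpd : Relation.TransGen G.child p d) :
    Relation.ReflTransGen (G.replaceDoc d d').activeChild d₀ p := by
  induction hp with
  | refl => exact .refl
  | @tail b c _ hbc ih =>
    have hcd : c ≠ d := by rintro rfl; exact hacyc c hpd
    exact (ih (.head hbc.1 hpd)).tail ⟨.inl hbc.1, .inl ⟨hbc.2, hcd⟩⟩

theorem FullyActive.replaceDoc (hacyc : ∀ e, ¬ Relation.TransGen G.child e e)
    (hd'A : d' ∉ G.A) (hd'child : ∀ e, ¬ G.child e d') (hd : G.FullyActive d) :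
    (G.replaceDoc d d').FullyActive d' := by
  obtain ⟨d₀, hroot, hpath⟩ := hd
  have hd'A' : d' ∈ (G.replaceDoc d d').A := .inr rfl
  rcases hpath.cases_tail with rfl | ⟨p, hp, hpd⟩
  · refine ⟨d', ⟨hd'A', ?_⟩, .refl⟩
    rintro e (he | ⟨he, -⟩)
    exacts [hd'child e he, hroot.2 e he]
  · have hd₀d : d₀ ≠ d := by rintro rfl; exact hroot.2 p hpd.1
    refine ⟨d₀, ⟨.inl ⟨hroot.1, hd₀d⟩, ?_⟩, ?_⟩
    · rintro e (he | ⟨-, rfl⟩)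
      exacts [hroot.2 e he, hd'A hroot.1]
    · exact (reflTransGen_activeChild_replaceDoc hacyc hp (.single hpd.1)).tail
        ⟨.inr ⟨hpd.1, rfl⟩, hd'A'⟩

end NavData

theorem stmt16 {α : Type} (H : NavData α) (hH : H.IsNavHist)
    {d d' : α} (hd : H.FullyActive d) (hd' : d' ∉ H.D) :
    (H.navigateFrom d d').FullyActive d' := by
  refine (hH.fullyActive_deleteJSF hd).replaceDoc ?_ ?_ ?_
  · exact fun e he =>
      hH.not_transGen_child_self e (Relation.TransGen.mono (fun _ _ h => h.1) _ _ he)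
  · exact fun h => hd' (hH.subset_D_of_mem_A h.1)
  · exact fun e he => hd' (hH.mem_D_of_child he.1).2
end
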